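/- If the masked model rollout is truncated to at most H_max steps of model usage (i.e., w(t;s,a) = 0 for t ≥ H_max), then the Q-value gap satisfies |Q^π(s,a) - Q̃^π_mask(s,a)| ≤ (2 r_max / (1-γ)) · ε · (1-γ^{H_max})/(1-γ); in particular the bound grows sublinearly in H_max and is uniformly bounded by 2 r_max ε/(1-γ)². -/

import Mathlib

/-- Total-variation distance between two pmfs on a finite type. -/
noncomputable def tv {X : Type*} [Fintype X] (f g : X → ℝ) : ℝ :=
  (1 / 2) * ∑ x, |f x - g x|

/-- State-action distribution at step `t` of the Markov chain induced by
dynamics `P` and policy `π`, started at the fixed state-action pair `sa0`. -/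
noncomputable def plainDist {S A : Type*} [Fintype S] [Fintype A] [DecidableEq S] [DecidableEq A]
    (P : S × A → S → ℝ) (π : S → A → ℝ) (sa0 : S × A) : ℕ → S × A → ℝ
  | 0 => fun sa => if sa = sa0 then 1 else 0
  | t + 1 => fun sa => (∑ sa', P sa' sa.1 * plainDist P π sa0 t sa') * π sa.1 sa.2

/-- Distribution at step `t` of the masked rollout process, on the augmented
space `(S × A) × Bool` where the flag records whether `t < H` (the rollout is
still model-based, i.e. all masks so far were `1`).  Transitions use the model
`Pm` while the flag is `true` and the true dynamics `P` afterwards; the new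
flag is the old flag conjoined with the mask of the new state-action pair. -/
noncomputable def maskedDist {S A : Type*} [Fintype S] [Fintype A] [DecidableEq S] [DecidableEq A]
    (P Pm : S × A → S → ℝ) (π : S → A → ℝ) (M : S × A → Bool) (sa0 : S × A) :
    ℕ → (S × A) × Bool → ℝ
  | 0 => fun x => if x.1 = sa0 ∧ x.2 = M sa0 then 1 else 0
  | t + 1 => fun x =>
      ∑ y : (S × A) × Bool,
        maskedDist P Pm π M sa0 t y *
        (if y.2 then Pm y.1 x.1.1 else P y.1 x.1.1) * π x.1.1 x.1.2 *
        (if x.2 = (y.2 && M x.1) then 1 else 0)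

/-- `w(t; s, a)`: the probability that step `t` of the masked rollout is still
model-based (`t < H`). -/
noncomputable def wProb {S A : Type*} [Fintype S] [Fintype A] [DecidableEq S] [DecidableEq A]
    (P Pm : S × A → S → ℝ) (π : S → A → ℝ) (M : S × A → Bool) (sa0 : S × A)
    (t : ℕ) : ℝ :=
  ∑ sa : S × A, maskedDist P Pm π M sa0 t (sa, true)

/-!
Let `Δₜ` be the difference between the true state-action distribution at step `t` and the
state-action marginal of the masked rollout. A step of the true dynamics is an `L¹` contraction,
and the only new discrepancy comes from the model-based mass `w(t)`, on which `P` and `Pm` differ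
by at most `2ε` in `L¹`. Hence `‖Δₜ₊₁‖₁ ≤ ‖Δₜ‖₁ + 2ε w(t)`, so `‖Δₜ‖₁ ≤ 2ε min(t, H_max)`, and the
discounted reward error is at most `2 r_max ε ∑ₜ γᵗ min(t, H_max) = 2 r_max ε γ (1 - γ^H_max)/(1 - γ)²`.
-/

open Finset

section Stochastic

variable {X Y : Type*} [Fintype X] [Fintype Y]

lemma sum_abs_sum_mul_le (D : X → Y → ℝ) (v : X → ℝ) :
    ∑ y, |∑ x, D x y * v x| ≤ ∑ x, (∑ y, |D x y|) * |v x| := by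
  calc ∑ y, |∑ x, D x y * v x| ≤ ∑ y, ∑ x, |D x y| * |v x| :=
        sum_le_sum fun y _ => (abs_sum_le_sum_abs _ _).trans_eq (by simp only [abs_mul])
    _ = ∑ x, (∑ y, |D x y|) * |v x| := by rw [sum_comm]; simp only [sum_mul]

lemma sum_abs_sum_mul_le_of_stochastic {K : X → Y → ℝ} (hK0 : ∀ x y, 0 ≤ K x y)
    (hK1 : ∀ x, ∑ y, K x y = 1) (v : X → ℝ) :
    ∑ y, |∑ x, K x y * v x| ≤ ∑ x, |v x| := by
  refine (sum_abs_sum_mul_le K v).trans_eq ?_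
  simp only [abs_of_nonneg (hK0 _ _), hK1, one_mul]

lemma sum_sum_mul_of_stochastic {K : X → Y → ℝ} (hK1 : ∀ x, ∑ y, K x y = 1) (v : X → ℝ) :
    ∑ y, ∑ x, K x y * v x = ∑ x, v x := by
  rw [sum_comm]
  simp only [← sum_mul, hK1, one_mul]

lemma sum_prod_mul_of_stochastic {π : X → Y → ℝ} (hπ1 : ∀ x, ∑ y, π x y = 1) (c : X → ℝ) :
    ∑ xy : X × Y, c xy.1 * π xy.1 xy.2 = ∑ x, c x := by
  rw [Fintype.sum_prod_type]
  simp only [← mul_sum, hπ1, mul_one]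

lemma abs_sum_mul_le_of_abs_le {c : ℝ} {f : X → ℝ} (hf : ∀ x, |f x| ≤ c) (v : X → ℝ) :
    |∑ x, f x * v x| ≤ c * ∑ x, |v x| := by
  rw [mul_sum]
  refine (abs_sum_le_sum_abs _ _).trans (sum_le_sum fun x _ => ?_)
  rw [abs_mul]
  exact mul_le_mul_of_nonneg_right (hf x) (abs_nonneg _)

lemma abs_sum_mul_le_of_prob {c : ℝ} {f p : X → ℝ} (hf : ∀ x, |f x| ≤ c)
    (hp0 : ∀ x, 0 ≤ p x) (hp1 : ∑ x, p x = 1) : |∑ x, f x * p x| ≤ c := by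
  refine (abs_sum_mul_le_of_abs_le hf p).trans_eq ?_
  rw [sum_congr rfl fun x _ => abs_of_nonneg (hp0 x), hp1, mul_one]

end Stochastic

lemma sum_range_le_min {w : ℕ → ℝ} {H : ℕ} (hw1 : ∀ t, w t ≤ 1) (hwH : ∀ t, H ≤ t → w t = 0)
    (t : ℕ) : ∑ k ∈ range t, w k ≤ min t H := by
  rw [← sum_subset (range_subset_range.mpr (min_le_left t H)) fun k hkt hk =>
    hwH k (by simp only [mem_range, Nat.lt_min] at hkt hk; omega)]
  simpa using sum_le_card_nsmul (range (min t H)) w 1 fun k _ => hw1 k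

lemma summable_geometric_mul_of_abs_le {γ c : ℝ} (hγ0 : 0 ≤ γ) (hγ1 : γ < 1) {f : ℕ → ℝ}
    (hf : ∀ t, |f t| ≤ c) : Summable fun t => γ ^ t * f t :=
  ((summable_geometric_of_lt_one hγ0 hγ1).mul_right c).of_norm_bounded fun t => by
    rw [norm_mul, norm_pow, Real.norm_of_nonneg hγ0]
    exact mul_le_mul_of_nonneg_left (hf t) (pow_nonneg hγ0 t)

lemma hasSum_geometric_indicator_lt {γ : ℝ} (hγ0 : 0 ≤ γ) (hγ1 : γ < 1) (k : ℕ) :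
    HasSum (fun t : ℕ => if k < t then γ ^ t else 0) (γ ^ (k + 1) / (1 - γ)) := by
  refine (hasSum_nat_add_iff' (k + 1)).mp ?_
  rw [sum_eq_zero fun i hi => if_neg (by simp only [mem_range] at hi; omega), sub_zero, div_eq_mul_inv]
  have hshift : (fun n : ℕ => if k < n + (k + 1) then γ ^ (n + (k + 1)) else 0)
      = fun n => γ ^ (k + 1) * γ ^ n := funext fun n => by rw [if_pos (by omega), pow_add, mul_comm]
  rw [hshift]
  exact (hasSum_geometric_of_lt_one hγ0 hγ1).mul_left _

lemma hasSum_geometric_mul_min {γ : ℝ} (hγ0 : 0 ≤ γ) (hγ1 : γ < 1) (H : ℕ) :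
    HasSum (fun t : ℕ => γ ^ t * (min t H : ℕ)) (γ * (1 - γ ^ H) / (1 - γ) ^ 2) := by
  have hmin : ∀ t : ℕ, γ ^ t * (min t H : ℕ) = ∑ k ∈ range H, if k < t then γ ^ t else 0 := by
    intro t
    rw [sum_ite, sum_const_zero, add_zero, sum_const, nsmul_eq_mul, mul_comm]
    congr
    have : (range H).filter (· < t) = range (min t H) := by ext; simp [and_comm]
    rw [this, card_range]
  have hsum : ∑ k ∈ range H, γ ^ (k + 1) / (1 - γ) = γ * (1 - γ ^ H) / (1 - γ) ^ 2 := by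
    have : γ - 1 ≠ 0 := by linarith
    have : 1 - γ ≠ 0 := by linarith
    simp only [pow_succ, ← sum_div, ← sum_mul, geom_sum_eq (by linarith : γ ≠ 1)]
    field_simp
    ring
  rw [funext hmin, ← hsum]
  exact hasSum_sum fun k _ => hasSum_geometric_indicator_lt hγ0 hγ1 k

lemma abs_tsum_sub_tsum_le {f g b : ℕ → ℝ} {B : ℝ} (hf : Summable f) (hg : Summable g)
    (hb : HasSum b B) (hfg : ∀ t, |f t - g t| ≤ b t) : |∑' t, f t - ∑' t, g t| ≤ B := by
  rw [← hf.tsum_sub hg, ← Real.norm_eq_abs]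
  exact tsum_of_norm_bounded hb fun t => (Real.norm_eq_abs _).trans_le (hfg t)

lemma abs_tsum_discounted_sub_le {X : Type*} [Fintype X] {γ c D : ℝ} (hγ0 : 0 ≤ γ)
    (hγ1 : γ < 1) {r : X → ℝ} (hr : ∀ x, |r x| ≤ c) {p q : ℕ → X → ℝ}
    (hp0 : ∀ t x, 0 ≤ p t x) (hp1 : ∀ t, ∑ x, p t x = 1)
    (hq0 : ∀ t x, 0 ≤ q t x) (hq1 : ∀ t, ∑ x, q t x = 1) {d : ℕ → ℝ}
    (hD : HasSum (fun t => γ ^ t * d t) D) (hpq : ∀ t, ∑ x, |p t x - q t x| ≤ d t) :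
    |∑' t, γ ^ t * ∑ x, r x * p t x - ∑' t, γ ^ t * ∑ x, r x * q t x| ≤ c * D := by
  obtain ⟨x, -, -⟩ := exists_ne_zero_of_sum_ne_zero (s := univ) (f := p 0)
    (by rw [hp1 0]; exact one_ne_zero)
  have hc : 0 ≤ c := (abs_nonneg _).trans (hr x)
  refine abs_tsum_sub_tsum_le
    (summable_geometric_mul_of_abs_le hγ0 hγ1 fun t => abs_sum_mul_le_of_prob hr (hp0 t) (hp1 t))
    (summable_geometric_mul_of_abs_le hγ0 hγ1 fun t => abs_sum_mul_le_of_prob hr (hq0 t) (hq1 t))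
    (hD.mul_left c) fun t => ?_
  rw [← mul_sub, ← sum_sub_distrib, abs_mul, abs_of_nonneg (pow_nonneg hγ0 t)]
  simp only [← mul_sub]
  calc γ ^ t * |∑ x, r x * (p t x - q t x)| ≤ γ ^ t * (c * d t) := by
        gcongr
        exact (abs_sum_mul_le_of_abs_le hr _).trans (mul_le_mul_of_nonneg_left (hpq t) hc)
    _ = c * (γ ^ t * d t) := by ring

section MaskedKernel

variable {S A : Type*} {P Pm : S × A → S → ℝ}

variable (P Pm) in
def maskedKernel (y : (S × A) × Bool) (s : S) : ℝ :=
  if y.2 then Pm y.1 s else P y.1 s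

lemma maskedKernel_nonneg (hP0 : ∀ sa s', 0 ≤ P sa s') (hPm0 : ∀ sa s', 0 ≤ Pm sa s')
    (y : (S × A) × Bool) (s : S) : 0 ≤ maskedKernel P Pm y s := by
  unfold maskedKernel; split <;> simp [*]

lemma sum_maskedKernel [Fintype S] (hP1 : ∀ sa, ∑ s', P sa s' = 1)
    (hPm1 : ∀ sa, ∑ s', Pm sa s' = 1) (y : (S × A) × Bool) : ∑ s, maskedKernel P Pm y s = 1 := by
  unfold maskedKernel; split <;> simp [*]

end MaskedKernel

section MaskedRollout

variable {S A : Type*} [Fintype S] [Fintype A] [DecidableEq S] [DecidableEq A]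
  {P Pm : S × A → S → ℝ} {π : S → A → ℝ} {M : S × A → Bool} {sa0 : S × A}

lemma plainDist_nonneg (hP0 : ∀ sa s', 0 ≤ P sa s') (hπ0 : ∀ s a, 0 ≤ π s a) :
    ∀ t sa, 0 ≤ plainDist P π sa0 t sa
  | 0, sa => by simp only [plainDist]; positivity
  | t + 1, sa => mul_nonneg (sum_nonneg fun sa' _ =>
      mul_nonneg (hP0 _ _) (plainDist_nonneg hP0 hπ0 t sa')) (hπ0 _ _)

lemma sum_plainDist (hP1 : ∀ sa, ∑ s', P sa s' = 1) (hπ1 : ∀ s, ∑ a, π s a = 1) :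
    ∀ t, ∑ sa, plainDist P π sa0 t sa = 1
  | 0 => by simp [plainDist]
  | t + 1 => (sum_prod_mul_of_stochastic hπ1 _).trans
      ((sum_sum_mul_of_stochastic hP1 _).trans (sum_plainDist hP1 hπ1 t))

lemma maskedDist_nonneg (hP0 : ∀ sa s', 0 ≤ P sa s') (hPm0 : ∀ sa s', 0 ≤ Pm sa s')
    (hπ0 : ∀ s a, 0 ≤ π s a) : ∀ t x, 0 ≤ maskedDist P Pm π M sa0 t x
  | 0, x => by simp only [maskedDist]; positivity
  | t + 1, x => sum_nonneg fun y _ => mul_nonneg (mul_nonneg (mul_nonneg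
      (maskedDist_nonneg hP0 hPm0 hπ0 t y) (maskedKernel_nonneg hP0 hPm0 y _)) (hπ0 _ _))
      (by positivity)

lemma maskedDist_true_eq_zero {sa : S × A} (h : M sa = false) :
    ∀ t, maskedDist P Pm π M sa0 t (sa, true) = 0
  | 0 => by simp only [maskedDist]; grind
  | t + 1 => sum_eq_zero fun y _ => by simp [h]

variable (P Pm π M sa0) in
noncomputable def maskedMarg (t : ℕ) (sa : S × A) : ℝ :=
  maskedDist P Pm π M sa0 t (sa, true) + maskedDist P Pm π M sa0 t (sa, false)

lemma sum_mul_maskedDist (f : S × A → ℝ) (t : ℕ) :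
    ∑ x, f x.1 * maskedDist P Pm π M sa0 t x = ∑ sa, f sa * maskedMarg P Pm π M sa0 t sa := by
  simp only [Fintype.sum_prod_type (f := fun x => f x.1 * _), Fintype.sum_bool, maskedMarg, mul_add]

lemma maskedMarg_zero (sa : S × A) :
    maskedMarg P Pm π M sa0 0 sa = plainDist P π sa0 0 sa := by
  by_cases h : sa = sa0 <;> cases hM : M sa0 <;> simp [maskedMarg, maskedDist, plainDist, h, hM]

lemma maskedMarg_succ (t : ℕ) (sa : S × A) :
    maskedMarg P Pm π M sa0 (t + 1) sa
      = (∑ y, maskedKernel P Pm y sa.1 * maskedDist P Pm π M sa0 t y) * π sa.1 sa.2 := by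
  simp only [maskedMarg, maskedDist, ← sum_add_distrib, sum_mul]
  refine sum_congr rfl fun y _ => ?_
  cases y.2 && M sa <;> simp only [maskedKernel, mul_ite, ite_mul, Bool.true_eq_false,
    Bool.false_eq_true, ↓reduceIte, mul_zero, mul_one, zero_add, add_zero] <;> split <;> ring

lemma maskedMarg_nonneg (hP0 : ∀ sa s', 0 ≤ P sa s') (hPm0 : ∀ sa s', 0 ≤ Pm sa s')
    (hπ0 : ∀ s a, 0 ≤ π s a) (t : ℕ) (sa : S × A) : 0 ≤ maskedMarg P Pm π M sa0 t sa :=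
  add_nonneg (maskedDist_nonneg hP0 hPm0 hπ0 t _) (maskedDist_nonneg hP0 hPm0 hπ0 t _)

lemma sum_maskedMarg (hP1 : ∀ sa, ∑ s', P sa s' = 1) (hPm1 : ∀ sa, ∑ s', Pm sa s' = 1)
    (hπ1 : ∀ s, ∑ a, π s a = 1) : ∀ t, ∑ sa, maskedMarg P Pm π M sa0 t sa = 1
  | 0 => by simp only [maskedMarg_zero, sum_plainDist hP1 hπ1]
  | t + 1 => by
      simp only [maskedMarg_succ]
      rw [sum_prod_mul_of_stochastic hπ1
          (fun s => ∑ y, maskedKernel P Pm y s * maskedDist P Pm π M sa0 t y),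
        sum_sum_mul_of_stochastic (sum_maskedKernel hP1 hPm1)]
      simpa only [one_mul, sum_maskedMarg hP1 hPm1 hπ1 t] using
        sum_mul_maskedDist (P := P) (Pm := Pm) (π := π) (M := M) (sa0 := sa0) (fun _ => 1) t

lemma wProb_le_one (hP0 : ∀ sa s', 0 ≤ P sa s') (hPm0 : ∀ sa s', 0 ≤ Pm sa s')
    (hP1 : ∀ sa, ∑ s', P sa s' = 1) (hPm1 : ∀ sa, ∑ s', Pm sa s' = 1)
    (hπ0 : ∀ s a, 0 ≤ π s a) (hπ1 : ∀ s, ∑ a, π s a = 1) (t : ℕ) :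
    wProb P Pm π M sa0 t ≤ 1 := by
  rw [← sum_maskedMarg (M := M) (sa0 := sa0) hP1 hPm1 hπ1 t]
  exact sum_le_sum fun sa _ => le_add_of_nonneg_right (maskedDist_nonneg hP0 hPm0 hπ0 t _)

lemma plainDist_sub_maskedMarg_succ (t : ℕ) (sa : S × A) :
    plainDist P π sa0 (t + 1) sa - maskedMarg P Pm π M sa0 (t + 1) sa
      = (∑ sa', P sa' sa.1 * (plainDist P π sa0 t sa' - maskedMarg P Pm π M sa0 t sa')
          + ∑ sa', (P sa' sa.1 - Pm sa' sa.1) * maskedDist P Pm π M sa0 t (sa', true))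
        * π sa.1 sa.2 := by
  rw [maskedMarg_succ, plainDist, ← sub_mul]
  congr 1
  rw [Fintype.sum_prod_type fun y => maskedKernel P Pm y sa.1 * maskedDist P Pm π M sa0 t y,
    ← sum_sub_distrib, ← sum_add_distrib]
  refine sum_congr rfl fun sa' _ => ?_
  simp only [Fintype.sum_bool, maskedKernel, maskedMarg, if_true, Bool.false_eq_true, if_false]
  ring

lemma sum_abs_plainDist_sub_maskedMarg_succ_le (hP0 : ∀ sa s', 0 ≤ P sa s')
    (hPm0 : ∀ sa s', 0 ≤ Pm sa s') (hP1 : ∀ sa, ∑ s', P sa s' = 1) (hπ0 : ∀ s a, 0 ≤ π s a)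
    (hπ1 : ∀ s, ∑ a, π s a = 1) {ε : ℝ} (hε : ∀ sa, M sa = true → tv (P sa) (Pm sa) ≤ ε)
    (t : ℕ) :
    ∑ sa, |plainDist P π sa0 (t + 1) sa - maskedMarg P Pm π M sa0 (t + 1) sa|
      ≤ ∑ sa, |plainDist P π sa0 t sa - maskedMarg P Pm π M sa0 t sa|
        + 2 * ε * wProb P Pm π M sa0 t := by
  set Δ := fun sa => plainDist P π sa0 t sa - maskedMarg P Pm π M sa0 t sa
  set q := fun sa => maskedDist P Pm π M sa0 t (sa, true)
  calc ∑ sa, |plainDist P π sa0 (t + 1) sa - maskedMarg P Pm π M sa0 (t + 1) sa|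
      = ∑ s, |∑ sa', P sa' s * Δ sa' + ∑ sa', (P sa' s - Pm sa' s) * q sa'| := by
        simp only [plainDist_sub_maskedMarg_succ, abs_mul, abs_of_nonneg (hπ0 _ _)]
        exact sum_prod_mul_of_stochastic hπ1
          fun s => |∑ sa', P sa' s * Δ sa' + ∑ sa', (P sa' s - Pm sa' s) * q sa'|
    _ ≤ ∑ s, |∑ sa', P sa' s * Δ sa'| + ∑ s, |∑ sa', (P sa' s - Pm sa' s) * q sa'| := by
        rw [← sum_add_distrib]
        exact sum_le_sum fun s _ => abs_add_le _ _
    _ ≤ ∑ sa, |Δ sa| + ∑ sa', (∑ s, |P sa' s - Pm sa' s|) * |q sa'| :=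
        add_le_add (sum_abs_sum_mul_le_of_stochastic hP0 hP1 Δ) (sum_abs_sum_mul_le _ q)
    _ ≤ ∑ sa, |Δ sa| + 2 * ε * wProb P Pm π M sa0 t := by
        have hstep : ∀ sa', (∑ s, |P sa' s - Pm sa' s|) * |q sa'| ≤ 2 * ε * q sa' := by
          intro sa'
          rw [abs_of_nonneg (maskedDist_nonneg hP0 hPm0 hπ0 t _)]
          cases hM : M sa'
          · simp [q, maskedDist_true_eq_zero hM]
          · have := hε sa' hM
            rw [tv] at this
            exact mul_le_mul_of_nonneg_right (by linarith) (maskedDist_nonneg hP0 hPm0 hπ0 t _)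
        rw [wProb, mul_sum]
        exact add_le_add le_rfl (sum_le_sum fun sa' _ => hstep sa')

lemma sum_abs_plainDist_sub_maskedMarg_le (hP0 : ∀ sa s', 0 ≤ P sa s')
    (hPm0 : ∀ sa s', 0 ≤ Pm sa s') (hP1 : ∀ sa, ∑ s', P sa s' = 1) (hπ0 : ∀ s a, 0 ≤ π s a)
    (hπ1 : ∀ s, ∑ a, π s a = 1) {ε : ℝ} (hε : ∀ sa, M sa = true → tv (P sa) (Pm sa) ≤ ε) :
    ∀ t, ∑ sa, |plainDist P π sa0 t sa - maskedMarg P Pm π M sa0 t sa|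
      ≤ 2 * ε * ∑ k ∈ range t, wProb P Pm π M sa0 k
  | 0 => by simp [maskedMarg_zero]
  | t + 1 => by
      rw [sum_range_succ, mul_add]
      exact (sum_abs_plainDist_sub_maskedMarg_succ_le hP0 hPm0 hP1 hπ0 hπ1 hε t).trans
        (add_le_add_left (sum_abs_plainDist_sub_maskedMarg_le hP0 hPm0 hP1 hπ0 hπ1 hε t) _)

end MaskedRollout

theorem stmt_11_general {S A : Type*} [Fintype S] [Fintype A] [DecidableEq S] [DecidableEq A]
    (P Pm : S × A → S → ℝ) (π : S → A → ℝ) (M : S × A → Bool)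
    (hP0 : ∀ sa s', 0 ≤ P sa s') (hPm0 : ∀ sa s', 0 ≤ Pm sa s')
    (hP1 : ∀ sa, ∑ s', P sa s' = 1) (hPm1 : ∀ sa, ∑ s', Pm sa s' = 1)
    (hπ0 : ∀ s a, 0 ≤ π s a) (hπ1 : ∀ s, ∑ a, π s a = 1)
    (r : S × A → ℝ) (rmax : ℝ) (hr : ∀ sa, |r sa| ≤ rmax)
    (γ : ℝ) (hγ : γ ∈ Set.Ioo (0 : ℝ) 1)
    (ε : ℝ) (hε0 : 0 ≤ ε)
    (hε : ∀ sa, M sa = true → tv (P sa) (Pm sa) ≤ ε)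
    (sa0 : S × A) (Hmax : ℕ)
    (hwH : ∀ t, Hmax ≤ t → wProb P Pm π M sa0 t = 0) :
    |(∑' t : ℕ, γ ^ t * ∑ sa, r sa * plainDist P π sa0 t sa)
        - (∑' t : ℕ, γ ^ t * ∑ x : (S × A) × Bool,
            r x.1 * maskedDist P Pm π M sa0 t x)|
      ≤ (2 * rmax / (1 - γ)) * ε * ((1 - γ ^ Hmax) / (1 - γ))
    ∧ (2 * rmax / (1 - γ)) * ε * ((1 - γ ^ Hmax) / (1 - γ))
        ≤ 2 * rmax * ε / (1 - γ) ^ 2 := by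
  obtain ⟨hγ0, hγ1⟩ := hγ
  have hrmax : 0 ≤ rmax := (abs_nonneg _).trans (hr sa0)
  have hΔ : ∀ t, ∑ sa, |plainDist P π sa0 t sa - maskedMarg P Pm π M sa0 t sa|
      ≤ 2 * ε * (min t Hmax : ℕ) := fun t =>
    (sum_abs_plainDist_sub_maskedMarg_le hP0 hPm0 hP1 hπ0 hπ1 hε t).trans <|
      mul_le_mul_of_nonneg_left
        (sum_range_le_min (wProb_le_one hP0 hPm0 hP1 hPm1 hπ0 hπ1) hwH t) (by positivity)
  have hD : HasSum (fun t : ℕ => γ ^ t * (2 * ε * (min t Hmax : ℕ)))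
      (2 * ε * (γ * (1 - γ ^ Hmax) / (1 - γ) ^ 2)) := by
    simpa only [mul_left_comm] using (hasSum_geometric_mul_min hγ0.le hγ1 Hmax).mul_left (2 * ε)
  have hgap := abs_tsum_discounted_sub_le hγ0.le hγ1 hr (plainDist_nonneg hP0 hπ0)
    (sum_plainDist hP1 hπ1) (maskedMarg_nonneg hP0 hPm0 hπ0) (sum_maskedMarg hP1 hPm1 hπ1) hD hΔ
  simp only [sum_mul_maskedDist]
  rw [show 2 * rmax / (1 - γ) * ε * ((1 - γ ^ Hmax) / (1 - γ))
      = 2 * rmax * ε * ((1 - γ ^ Hmax) / (1 - γ) ^ 2) by field_simp]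
  refine ⟨hgap.trans ?_, ?_⟩
  · have hγH : 0 ≤ 1 - γ ^ Hmax := sub_nonneg.mpr (pow_le_one₀ hγ0.le hγ1.le)
    calc rmax * (2 * ε * (γ * (1 - γ ^ Hmax) / (1 - γ) ^ 2))
        = 2 * rmax * ε * (γ * ((1 - γ ^ Hmax) / (1 - γ) ^ 2)) := by ring
      _ ≤ 2 * rmax * ε * ((1 - γ ^ Hmax) / (1 - γ) ^ 2) := by
        gcongr
        exact mul_le_of_le_one_left (by positivity) hγ1.le
  · rw [← mul_div_assoc]
    exact div_le_div_of_nonneg_right (mul_le_of_le_one_right (by positivity)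
      (sub_le_self _ (by positivity)))
      (by positivity)

/-- If the masked rollout uses the model for at most `H_max` steps
(`w(t;s,a) = 0` for `t ≥ H_max`, and `w ≤ 1`), then the Q-value gap is at most
`(2 r_max/(1-γ)) ε (1-γ^{H_max})/(1-γ)`, and in particular is uniformly bounded
by `2 r_max ε/(1-γ)²`. -/
theorem stmt_11 {S A : Type*} [Fintype S] [Fintype A] [DecidableEq S] [DecidableEq A]
    (P Pm : S × A → S → ℝ) (π : S → A → ℝ) (M : S × A → Bool)
    (hP0 : ∀ sa s', 0 ≤ P sa s') (hPm0 : ∀ sa s', 0 ≤ Pm sa s')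
    (hP1 : ∀ sa, ∑ s', P sa s' = 1) (hPm1 : ∀ sa, ∑ s', Pm sa s' = 1)
    (hπ0 : ∀ s a, 0 ≤ π s a) (hπ1 : ∀ s, ∑ a, π s a = 1)
    (r : S × A → ℝ) (rmax : ℝ) (hr : ∀ sa, |r sa| ≤ rmax)
    (γ : ℝ) (hγ : γ ∈ Set.Ioo (0 : ℝ) 1)
    (ε : ℝ) (hε0 : 0 ≤ ε)
    (hε : ∀ sa, M sa = true → tv (P sa) (Pm sa) ≤ ε)
    (sa0 : S × A) (Hmax : ℕ)
    (hw1 : ∀ t, wProb P Pm π M sa0 t ≤ 1)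
    (hwH : ∀ t, Hmax ≤ t → wProb P Pm π M sa0 t = 0) :
    |(∑' t : ℕ, γ ^ t * ∑ sa, r sa * plainDist P π sa0 t sa)
        - (∑' t : ℕ, γ ^ t * ∑ x : (S × A) × Bool,
            r x.1 * maskedDist P Pm π M sa0 t x)|
      ≤ (2 * rmax / (1 - γ)) * ε * ((1 - γ ^ Hmax) / (1 - γ))
    ∧ (2 * rmax / (1 - γ)) * ε * ((1 - γ ^ Hmax) / (1 - γ))
        ≤ 2 * rmax * ε / (1 - γ) ^ 2 :=
  stmt_11_general P Pm π M hP0 hPm0 hP1 hPm1 hπ0 hπ1 r rmax hr γ hγ ε hε0 hε sa0 Hmax hwH
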